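/- arXiv:1801.01417 — 4 statements merged into one kernel-verified Lean document; each statement's English description precedes it below -/
import Mathlib

section
/- Let x > 0 satisfy J₀(x) = 0, J₁(x) ≠ 0 and J₃(x) ≠ 0. Then P₃(x) := 10 + 2x·J₃'(x)/J₃(x) = 32/(8 − x²). In particular P₃(x) < 0 whenever x² > 8. -/
theorem bessel_P3_at_zero_of_J0 (J J' : ℤ → ℝ → ℝ)
    (h1 : ∀ (n : ℤ) (x : ℝ), x ≠ 0 → 2 * (n : ℝ) / x * J n x = J (n - 1) x + J (n + 1) x)
    (h3 : ∀ (n : ℤ) (x : ℝ), x * J' n x = (n : ℝ) * J n x - x * J (n + 1) x)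
    (x : ℝ) (hx : 0 < x) (hJ0 : J 0 x = 0) (hJ1 : J 1 x ≠ 0) (hJ3 : J 3 x ≠ 0) :
    (10 + 2 * x * J' 3 x / J 3 x = 32 / (8 - x ^ 2)) ∧
    (x ^ 2 > 8 → 10 + 2 * x * J' 3 x / J 3 x < 0) := by
  have hxne : x ≠ 0 := ne_of_gt hx
  have e1 := h1 1 x hxne
  have e2 := h1 2 x hxne
  have e3 := h3 3 x
  have e4 := h1 3 x hxne
  norm_num [hJ0] at e1 e2 e3 e4
  -- e1 : 2 / x * J 1 x = J 2 x  (after hJ0)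
  have hb : x * J 2 x = 2 * J 1 x := by
    field_simp at e1
    linarith
  have key : (8 - x ^ 2) * J 1 x = x ^ 2 * J 3 x := by
    field_simp at e2
    nlinarith [e2, hb]
  have h8 : 8 - x ^ 2 ≠ 0 := by
    intro h
    apply hJ3
    have hz : x ^ 2 * J 3 x = 0 := by rw [← key, h, zero_mul]
    rcases mul_eq_zero.mp hz with h' | h'
    · exact absurd h' (pow_ne_zero 2 hxne)
    · exact h'
  have hp : x * J' 3 x = 2 * J 1 x - 3 * J 3 x := by
    field_simp at e4
    nlinarith [e3, e4, hb]
  have heq : 10 + 2 * x * J' 3 x / J 3 x = 32 / (8 - x ^ 2) := by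
    field_simp
    nlinarith [hp, key, mul_ne_zero hJ3 h8]
  refine ⟨heq, fun hx2 => ?_⟩
  rw [heq]
  apply div_neg_of_pos_of_neg
  · norm_num
  · linarith
end

section
/- Let y > 0 satisfy J₁(y) = 0, y² ≠ 24, and J₂(y), J₄(y) ≠ 0. Define P(1) := 20 + 2y(J₂'(y)/J₂(y) + J₄'(y)/J₄(y)). Then P(1) = 192/(24 − y²); in particular P(1) < 0 whenever y² > 24. -/
theorem bessel_P1p_at_zero_of_J1 (J J' : ℤ → ℝ → ℝ)
    (h1 : ∀ (n : ℤ) (x : ℝ), x ≠ 0 → 2 * (n : ℝ) / x * J n x = J (n - 1) x + J (n + 1) x)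
    (h3 : ∀ (n : ℤ) (x : ℝ), x * J' n x = (n : ℝ) * J n x - x * J (n + 1) x)
    (y : ℝ) (hy : 0 < y) (hJ1 : J 1 y = 0) (hy24 : y ^ 2 ≠ 24)
    (hJ2 : J 2 y ≠ 0) (hJ4 : J 4 y ≠ 0) :
    (20 + 2 * y * (J' 2 y / J 2 y + J' 4 y / J 4 y) = 192 / (24 - y ^ 2)) ∧
    (y ^ 2 > 24 → 20 + 2 * y * (J' 2 y / J 2 y + J' 4 y / J 4 y) < 0) := by
  have hy0 : y ≠ 0 := ne_of_gt hy
  have h24 : (24 : ℝ) - y ^ 2 ≠ 0 := fun h => hy24 (by linarith)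
  have e1 := h1 2 y hy0
  have e2 := h1 3 y hy0
  have e3 := h1 4 y hy0
  have d2 := h3 2 y
  have d4 := h3 4 y
  norm_num [hJ1] at e1 e2 e3 d2 d4
  -- J 3 y = 4 / y * J 2 y
  have h3e : J 3 y = 4 / y * J 2 y := by
    field_simp at e1 ⊢; linarith [e1]
  have h4e : J 4 y = (24 - y ^ 2) / y ^ 2 * J 2 y := by
    rw [h3e] at e2; field_simp at e2 ⊢; nlinarith [e2]
  have h5e : J 5 y = 8 / y * J 4 y - 4 / y * J 2 y := by
    rw [h3e] at e3; field_simp at e3 ⊢; nlinarith [e3]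
  have hd2 : J' 2 y = -2 * J 2 y / y := by
    rw [h3e] at d2; field_simp at d2 ⊢; linarith
  have hd4 : J' 4 y = (4 * J 2 y - 4 * J 4 y) / y := by
    rw [h5e] at d4; field_simp at d4 ⊢; linarith
  have key : 20 + 2 * y * (J' 2 y / J 2 y + J' 4 y / J 4 y) = 192 / (24 - y ^ 2) := by
    rw [h4e] at hJ4
    rw [hd2, hd4, h4e]
    field_simp
    ring
  refine ⟨key, fun hgt => ?_⟩
  rw [key]
  apply div_neg_of_pos_of_neg <;> norm_num <;> linarith
end

section
/- For integers m ≥ 2 and p ≥ 1, let y := j_{m,p} > 0 be a zero of J_m with J_{m±1}(y), J_{m±3}(y) ≠ 0 and define P(1) := 20 + 2y(J_{m+3}'(y)/J_{m+3}(y) + J_{m−3}'(y)/J_{m−3}(y)). Then P(1) = 64·(2(m²−4)(m²−1) − y²(2m²+1)) / ((4(m+2)(m+1) − y²)(4(m−2)(m−1) − y²)), provided the denominator does not vanish. -/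
theorem bessel_Pmp1_formula (J J' : ℤ → ℝ → ℝ)
    (h1 : ∀ (n : ℤ) (x : ℝ), x ≠ 0 → 2 * (n : ℝ) / x * J n x = J (n - 1) x + J (n + 1) x)
    (h3 : ∀ (n : ℤ) (x : ℝ), x * J' n x = (n : ℝ) * J n x - x * J (n + 1) x)
    (h4 : ∀ (n : ℤ) (x : ℝ), x * J' n x = -(n : ℝ) * J n x + x * J (n - 1) x)
    (m : ℤ) (hm : 2 ≤ m) (p : ℕ) (hp : 1 ≤ p)
    (y : ℝ) (hy : 0 < y) (hJm : J m y = 0)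
    (hJm1 : J (m - 1) y ≠ 0) (hJp1 : J (m + 1) y ≠ 0)
    (hJm3 : J (m - 3) y ≠ 0) (hJp3 : J (m + 3) y ≠ 0)
    (hden : (4 * ((m : ℝ) + 2) * ((m : ℝ) + 1) - y ^ 2) *
        (4 * ((m : ℝ) - 2) * ((m : ℝ) - 1) - y ^ 2) ≠ 0) :
    20 + 2 * y * (J' (m + 3) y / J (m + 3) y + J' (m - 3) y / J (m - 3) y) =
      64 * (2 * ((m : ℝ) ^ 2 - 4) * ((m : ℝ) ^ 2 - 1) - y ^ 2 * (2 * (m : ℝ) ^ 2 + 1)) /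
        ((4 * ((m : ℝ) + 2) * ((m : ℝ) + 1) - y ^ 2) *
          (4 * ((m : ℝ) - 2) * ((m : ℝ) - 1) - y ^ 2)) := by
  have hy0 : y ≠ 0 := hy.ne'
  -- recurrence instances
  have e1 := h1 (m + 1) y hy0
  have e2 := h1 (m + 2) y hy0
  have e3 := h1 (m - 1) y hy0
  have e4 := h1 (m - 2) y hy0
  simp only [add_sub_cancel_right, sub_add_cancel] at e1 e2 e3 e4
  rw [show (m : ℤ) + 1 + 1 = m + 2 from by ring] at e1
  rw [show (m : ℤ) + 2 - 1 = m + 1 from by ring,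
    show (m : ℤ) + 2 + 1 = m + 3 from by ring] at e2
  rw [show (m : ℤ) - 1 - 1 = m - 2 from by ring] at e3
  rw [show (m : ℤ) - 2 + 1 = m - 1 from by ring,
    show (m : ℤ) - 2 - 1 = m - 3 from by ring] at e4
  rw [hJm] at e1 e3
  push_cast at e1 e2 e3 e4
  -- values of J (m+2), J (m+3), J (m-2), J (m-3) in terms of J (m±1)
  have v2 : J (m + 2) y = 2 * ((m : ℝ) + 1) / y * J (m + 1) y := by
    rw [e1]; ring
  have v3 : J (m + 3) y = (4 * ((m : ℝ) + 2) * ((m : ℝ) + 1) - y ^ 2) / y ^ 2 * J (m + 1) y := by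
    have : J (m + 3) y = 2 * ((m : ℝ) + 2) / y * J (m + 2) y - J (m + 1) y := by
      rw [e2]; ring
    rw [this, v2]; field_simp; ring
  have w2 : J (m - 2) y = 2 * ((m : ℝ) - 1) / y * J (m - 1) y := by
    linarith [e3]
  have w3 : J (m - 3) y = (4 * ((m : ℝ) - 2) * ((m : ℝ) - 1) - y ^ 2) / y ^ 2 * J (m - 1) y := by
    have : J (m - 3) y = 2 * ((m : ℝ) - 2) / y * J (m - 2) y - J (m - 1) y := by
      rw [e4]; ring
    rw [this, w2]; field_simp; ring
  -- derivatives
  have d1 := h4 (m + 3) y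
  rw [show (m : ℤ) + 3 - 1 = m + 2 from by ring] at d1
  have d2 := h3 (m - 3) y
  rw [show (m : ℤ) - 3 + 1 = m - 2 from by ring] at d2
  push_cast at d1 d2
  have hA : (4 * ((m : ℝ) + 2) * ((m : ℝ) + 1) - y ^ 2) ≠ 0 := left_ne_zero_of_mul hden
  have hB : (4 * ((m : ℝ) - 2) * ((m : ℝ) - 1) - y ^ 2) ≠ 0 := right_ne_zero_of_mul hden
  have j1 : J' (m + 3) y = (-((m : ℝ) + 3) * J (m + 3) y + y * J (m + 2) y) / y := by
    rw [← d1]; field_simp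
  have j2 : J' (m - 3) y = (((m : ℝ) - 3) * J (m - 3) y - y * J (m - 2) y) / y := by
    rw [← d2]; field_simp
  rw [j1, j2, v2, v3, w2, w3]
  field_simp
  ring
end

section
/- Let P, Q : ℕ → ℝ with P(k) = Q(k) + Q(k+1) and Q(k) ≥ 0 for all k, Q(0) = 0. Then for any conjugate-symmetric square-summable sequence (c_ℓ) with c_{2ℓ}=0 and any unit complex number q for which the expression is real, Σ_{k≥0} P(k)|c_{2k+1}|² + 2q·Σ_{k≥1} Q(k) c_{1+2k} c_{1−2k} ≥ 0. -/
/-!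
Write `a k = ‖c (2k+1)‖`; conjugate symmetry gives `‖c (1 - 2(k+1))‖ = a k`, so the second sum
has modulus at most `∑ Q (k+1) a (k+1) a k`. Since `P k = Q k + Q (k+1)` with `Q ≥ 0`, the first
sum dominates `∑ Q (k+1) (a (k+1)² + a k²)` (it differs by `Q 0 a 0² ≥ 0`), and AM-GM
`2 x y ≤ x² + y²` termwise absorbs the second sum.
-/

lemma summable_mul_of_summable_add_mul {ι : Type*} {u v w : ι → ℝ} (hu : ∀ i, 0 ≤ u i)
    (hv : ∀ i, 0 ≤ v i) (hw : ∀ i, 0 ≤ w i) (h : Summable fun i => (u i + v i) * w i) :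
    Summable fun i => u i * w i :=
  h.of_nonneg_of_le (fun i => mul_nonneg (hu i) (hw i))
    (fun i => mul_le_mul_of_nonneg_right (le_add_of_nonneg_right (hv i)) (hw i))

section WeightedSums

variable {Q a : ℕ → ℝ}

lemma summable_mul_sq_of_summable_add_succ_mul_sq (hQ : ∀ k, 0 ≤ Q k)
    (h : Summable fun k => (Q k + Q (k + 1)) * a k ^ 2) :
    (Summable fun k => Q k * a k ^ 2) ∧ Summable fun k => Q (k + 1) * a k ^ 2 :=
  ⟨summable_mul_of_summable_add_mul hQ (fun k => hQ (k + 1)) (fun k => sq_nonneg _) h,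
    summable_mul_of_summable_add_mul (fun k => hQ (k + 1)) hQ (fun k => sq_nonneg _)
      (h.congr fun k => by rw [add_comm])⟩

lemma two_mul_succ_mul_mul_succ_le (hQ : ∀ k, 0 ≤ Q k) (k : ℕ) :
    2 * (Q (k + 1) * a (k + 1) * a k) ≤ Q (k + 1) * a (k + 1) ^ 2 + Q (k + 1) * a k ^ 2 := by
  nlinarith [mul_le_mul_of_nonneg_left (two_mul_le_add_sq (a (k + 1)) (a k)) (hQ (k + 1))]

lemma summable_succ_mul_mul_succ (hQ : ∀ k, 0 ≤ Q k)
    (h : Summable fun k => (Q k + Q (k + 1)) * a k ^ 2) :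
    Summable fun k => Q (k + 1) * a (k + 1) * a k := by
  obtain ⟨h₀, h₁⟩ := summable_mul_sq_of_summable_add_succ_mul_sq hQ h
  refine ((summable_nat_add_iff 1).2 h₀ |>.add h₁).of_norm_bounded fun k => ?_
  rw [Real.norm_eq_abs, abs_le]
  constructor <;> nlinarith [two_mul_succ_mul_mul_succ_le (a := a) hQ k,
    mul_le_mul_of_nonneg_left (two_mul_le_add_sq (a (k + 1)) (-a k)) (hQ (k + 1))]

lemma two_mul_tsum_succ_mul_mul_succ_le (hQ : ∀ k, 0 ≤ Q k)
    (h : Summable fun k => (Q k + Q (k + 1)) * a k ^ 2) :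
    2 * ∑' k, Q (k + 1) * a (k + 1) * a k ≤ ∑' k, (Q k + Q (k + 1)) * a k ^ 2 := by
  obtain ⟨h₀, h₁⟩ := summable_mul_sq_of_summable_add_succ_mul_sq hQ h
  have h₀' : Summable fun k => Q (k + 1) * a (k + 1) ^ 2 := (summable_nat_add_iff 1).2 h₀
  calc 2 * ∑' k, Q (k + 1) * a (k + 1) * a k
      = ∑' k, 2 * (Q (k + 1) * a (k + 1) * a k) := tsum_mul_left.symm
    _ ≤ ∑' k, (Q (k + 1) * a (k + 1) ^ 2 + Q (k + 1) * a k ^ 2) :=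
        ((summable_succ_mul_mul_succ hQ h).mul_left 2).tsum_le_tsum
          (two_mul_succ_mul_mul_succ_le hQ) (h₀'.add h₁)
    _ = ∑' k, Q (k + 1) * a (k + 1) ^ 2 + ∑' k, Q (k + 1) * a k ^ 2 := h₀'.tsum_add h₁
    _ ≤ ∑' k, Q k * a k ^ 2 + ∑' k, Q (k + 1) * a k ^ 2 := by
        rw [h₀.tsum_eq_zero_add]
        nlinarith [mul_nonneg (hQ 0) (sq_nonneg (a 0))]
    _ = ∑' k, (Q k + Q (k + 1)) * a k ^ 2 := by
        rw [← h₀.tsum_add h₁]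
        exact tsum_congr fun k => by ring

end WeightedSums

lemma Complex.neg_mul_tsum_norm_le_re_mul_tsum {ι : Type*} {f : ι → ℂ}
    (hf : Summable fun i => ‖f i‖) (z : ℂ) :
    -(‖z‖ * ∑' i, ‖f i‖) ≤ (z * ∑' i, f i).re := by
  have hre : -(z * ∑' i, f i).re ≤ ‖z‖ * ∑' i, ‖f i‖ :=
    calc -(z * ∑' i, f i).re ≤ ‖z * ∑' i, f i‖ :=
          (neg_le_abs _).trans (Complex.abs_re_le_norm _)
      _ ≤ ‖z‖ * ∑' i, ‖f i‖ := by
          rw [norm_mul]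
          exact mul_le_mul_of_nonneg_left (norm_tsum_le_tsum_norm hf) (norm_nonneg z)
  linarith

theorem second_derivative_nonneg_quadratic_form_general (c : ℤ → ℂ)
    (hc : ∀ ℓ : ℤ, c (-ℓ) = starRingEnd ℂ (c ℓ))
    (P Q : ℕ → ℝ) (hPQ : ∀ k, P k = Q k + Q (k + 1))
    (hQ : ∀ k, 0 ≤ Q k)
    (q : ℂ) (hq : ‖q‖ = 1)
    (hsum1 : Summable fun k : ℕ => P k * ‖c (2 * (k : ℤ) + 1)‖ ^ 2) :
    0 ≤ (∑' k : ℕ, P k * ‖c (2 * (k : ℤ) + 1)‖ ^ 2) +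
      (2 * q * ∑' k : ℕ,
        (Q (k + 1) : ℂ) * c (1 + 2 * ((k : ℤ) + 1)) * c (1 - 2 * ((k : ℤ) + 1))).re := by
  set a : ℕ → ℝ := fun k => ‖c (2 * (k : ℤ) + 1)‖
  have hnorm : ∀ k : ℕ, ‖(Q (k + 1) : ℂ) * c (1 + 2 * ((k : ℤ) + 1)) * c (1 - 2 * ((k : ℤ) + 1))‖
      = Q (k + 1) * a (k + 1) * a k := fun k => by
    rw [norm_mul, norm_mul, Complex.norm_real, Real.norm_of_nonneg (hQ (k + 1)),
      show 1 - 2 * ((k : ℤ) + 1) = -(2 * k + 1) by ring, hc, RCLike.norm_conj]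
    simp only [a]
    push_cast
    ring_nf
  have hP : (fun k => P k * a k ^ 2) = fun k => (Q k + Q (k + 1)) * a k ^ 2 := by
    simp only [hPQ]
  rw [hP] at hsum1 ⊢
  have hcross := Complex.neg_mul_tsum_norm_le_re_mul_tsum
    ((summable_succ_mul_mul_succ hQ hsum1).congr fun k => (hnorm k).symm) (2 * q)
  rw [tsum_congr hnorm, norm_mul, hq, Complex.norm_two, mul_one] at hcross
  linarith [two_mul_tsum_succ_mul_mul_succ_le hQ hsum1]

theorem second_derivative_nonneg_quadratic_form (c : ℤ → ℂ)
    (hc : ∀ ℓ : ℤ, c (-ℓ) = starRingEnd ℂ (c ℓ))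
    (heven : ∀ ℓ : ℤ, c (2 * ℓ) = 0)
    (hsq : Summable fun ℓ : ℤ => ‖c ℓ‖ ^ 2)
    (P Q : ℕ → ℝ) (hPQ : ∀ k, P k = Q k + Q (k + 1))
    (hQ : ∀ k, 0 ≤ Q k) (hQ0 : Q 0 = 0)
    (q : ℂ) (hq : ‖q‖ = 1)
    (hsum1 : Summable fun k : ℕ => P k * ‖c (2 * (k : ℤ) + 1)‖ ^ 2)
    (hsum2 : Summable fun k : ℕ =>
      Q (k + 1) * ‖c (1 + 2 * ((k : ℤ) + 1))‖ * ‖c (1 - 2 * ((k : ℤ) + 1))‖)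
    (hreal : (2 * q * ∑' k : ℕ,
      (Q (k + 1) : ℂ) * c (1 + 2 * ((k : ℤ) + 1)) * c (1 - 2 * ((k : ℤ) + 1))).im = 0) :
    0 ≤ (∑' k : ℕ, P k * ‖c (2 * (k : ℤ) + 1)‖ ^ 2) +
      (2 * q * ∑' k : ℕ,
        (Q (k + 1) : ℂ) * c (1 + 2 * ((k : ℤ) + 1)) * c (1 - 2 * ((k : ℤ) + 1))).re :=
  second_derivative_nonneg_quadratic_form_general c hc P Q hPQ hQ q hq hsum1
end
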